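/- arXiv:2002.05974 — 6 statements merged into one kernel-verified Lean document; each statement's English description precedes it below -/
import Mathlib

section
/- For every finitely generated group Γ: ks_{A4}(Γ) = ks_{V4}^{A4}(Γ) + ks_{ℤ3}^{A4}(Γ) − 1 + (ks_{A4}^w(Γ) − 4·(|Hom(Γ, ℤ3)| − 1) − |Hom(Γ, V4)|)/12. -/
/-- The conjugation equivalence on homomorphisms `Γ →* G`. -/
def homConj (Γ G : Type*) [Group Γ] [Group G] : Setoid (Γ →* G) where
  r φ ψ := ∃ g : G, ∀ x, ψ x = g * φ x * g⁻¹
  iseqv := by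
    refine ⟨fun φ => ⟨1, by simp⟩, ?_, ?_⟩
    · rintro φ ψ ⟨g, hg⟩
      exact ⟨g⁻¹, fun x => by rw [hg x]; group⟩
    · rintro φ ψ χ ⟨g, hg⟩ ⟨h, hh⟩
      exact ⟨h * g, fun x => by rw [hh x, hg x]; group⟩

/-- `ks G Γ`: number of conjugacy classes of homomorphisms `Γ →* G`. -/
noncomputable def ks (G Γ : Type*) [Group G] [Group Γ] : ℕ :=
  Nat.card (Quotient (homConj Γ G))

/-- `ksw G Γ`: number of homomorphisms `Γ →* G`. -/
noncomputable def ksw (G Γ : Type*) [Group G] [Group Γ] : ℕ :=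
  Nat.card (Γ →* G)

/-- `ksSub G H Γ`: the number of conjugacy classes of homomorphisms `Γ →* G` whose
image is contained in some subgroup of `G` isomorphic to `H`. -/
noncomputable def ksSub (G : Type*) [Group G] (H : Type*) [Group H] (Γ : Type*) [Group Γ] : ℕ :=
  Nat.card (Quotient (Setoid.comap
    (Subtype.val : {φ : Γ →* G // ∃ K : Subgroup G, Nonempty (K ≃* H) ∧ φ.range ≤ K} → (Γ →* G))
    (homConj Γ G)))

/-- Number of conjugacy classes of homomorphisms `Γ →* G` satisfying a property `P`. -/
noncomputable def ksRestrict (G Γ : Type*) [Group G] [Group Γ] (P : (Γ →* G) → Prop) : ℕ :=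
  Nat.card (Quotient (Setoid.comap
    (Subtype.val : {φ : Γ →* G // P φ} → (Γ →* G)) (homConj Γ G)))

/-- A maximal abelian subgroup. -/
def IsMaximalAbelian {G : Type*} [Group G] (K : Subgroup G) : Prop :=
  IsMulCommutative K ∧ ∀ K' : Subgroup G, IsMulCommutative K' → K ≤ K' → K' = K

abbrev A4 : Type := alternatingGroup (Fin 4)
abbrev A5 : Type := alternatingGroup (Fin 5)
abbrev V4 : Type := Multiplicative (ZMod 2 × ZMod 2)
abbrev Z3 : Type := Multiplicative (ZMod 3)
abbrev Z5 : Type := Multiplicative (ZMod 5)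
/-- The free abelian group of rank `g`, written multiplicatively. -/
abbrev Zg (g : ℕ) : Type := Multiplicative (Fin g → ℤ)

/-!
Every subgroup of `A4` lies in the Klein four-group `V`, has order 3, or is all of `A4`: a subgroup
of order 6 would have index 2, hence abelian quotient, hence contain the commutator subgroup `V`.
Sorting homomorphisms `Γ →* A4` by the order of their image splits their conjugacy classes into
three kinds. Those with image in `V` are counted by `ks_{V4}^{A4}`, those with image of order 3 by
`ks_{ℤ3}^{A4} - 1` (the trivial homomorphism also lies in a copy of `ℤ3`). Since `A4` has trivial
center, conjugation permutes the surjective homomorphisms freely, in classes of size 12. The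
others are the `|Hom(Γ, V4)|` with image in `V` and the `4 (|Hom(Γ, ℤ3)| - 1)` with image one of
the four subgroups of order 3, which are the point stabilisers.
-/

theorem Nat.card_subtype_or_of_disjoint {α : Type*} [Finite α] {P Q : α → Prop}
    (h : ∀ a, P a → ¬Q a) :
    Nat.card {a // P a ∨ Q a} = Nat.card {a // P a} + Nat.card {a // Q a} := by
  change Nat.card ({a | P a ∨ Q a} : Set α) =
    Nat.card ({a | P a} : Set α) + Nat.card ({a | Q a} : Set α)
  simp only [Nat.card_coe_set_eq, Set.ofPred_or]
  exact Set.ncard_union_eq (Set.disjoint_left.mpr h)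

theorem Group.FG.finite_monoidHom {Γ : Type*} (G : Type*) [Group Γ] [Group G] [Finite G]
    (hΓ : Group.FG Γ) : Finite (Γ →* G) := by
  obtain ⟨S, hS⟩ := hΓ.1
  refine Finite.of_injective (fun φ (s : S) => φ s) fun φ ψ h => ?_
  exact MonoidHom.eq_of_eqOn_dense hS fun x hx => congrFun h ⟨x, hx⟩

theorem Subgroup.zpowers_eq_of_card_prime {G : Type*} [Group G] {p : ℕ} [Fact p.Prime]
    {K : Subgroup G} (hK : Nat.card K = p) {g : G} (hgK : g ∈ K) (hg : g ≠ 1) :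
    Subgroup.zpowers g = K := by
  have : Finite K := Nat.finite_of_card_ne_zero (hK ▸ (Fact.out : p.Prime).ne_zero)
  refine Subgroup.eq_of_le_of_card_ge (Subgroup.zpowers_le.mpr hgK) ?_
  rw [hK, Nat.card_zpowers]
  rcases (Fact.out : p.Prime).eq_one_or_self_of_dvd _ (hK ▸ K.orderOf_dvd_natCard hgK) with h | h
  · exact absurd (orderOf_eq_one_iff.mp h) hg
  · exact h.ge

section ConjugacyClasses

variable {Γ G : Type*} [Group Γ] [Group G]

theorem homConj_iff {φ ψ : Γ →* G} :
    homConj Γ G φ ψ ↔ ∃ g : G, ψ = (MulAut.conj g).toMonoidHom.comp φ :=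
  ⟨fun ⟨g, h⟩ => ⟨g, MonoidHom.ext h⟩, fun ⟨g, h⟩ => ⟨g, fun x => by rw [h]; rfl⟩⟩

theorem homConj_conj_comp (g : G) (φ : Γ →* G) :
    homConj Γ G φ ((MulAut.conj g).toMonoidHom.comp φ) :=
  homConj_iff.mpr ⟨g, rfl⟩

theorem card_range_eq_of_homConj {φ ψ : Γ →* G} (h : homConj Γ G φ ψ) :
    Nat.card ψ.range = Nat.card φ.range := by
  obtain ⟨g, rfl⟩ := homConj_iff.mp h
  rw [MonoidHom.range_comp]
  exact Subgroup.card_map_of_injective (MulAut.conj g).injective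

theorem ksRestrict_eq_card_image (P : (Γ →* G) → Prop) :
    ksRestrict G Γ P = Nat.card (Quotient.mk (homConj Γ G) '' {φ | P φ}) := by
  rw [ksRestrict, Setoid.comap_eq, Nat.card_congr (Setoid.quotientKerEquivRange _),
    Set.range_comp, Subtype.range_coe_subtype]

theorem ks_eq_ksRestrict_true : ks G Γ = ksRestrict G Γ fun _ => True := by
  rw [ksRestrict_eq_card_image, Set.ofPred_true,
    Set.image_univ_of_surjective Quotient.mk_surjective, Nat.card_univ, ks]

theorem ksRestrict_congr {P Q : (Γ →* G) → Prop} (h : ∀ φ, P φ ↔ Q φ) :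
    ksRestrict G Γ P = ksRestrict G Γ Q := by
  simp only [ksRestrict_eq_card_image, h]

theorem ksRestrict_or [Finite (Γ →* G)] {P Q : (Γ →* G) → Prop}
    (hP : ∀ φ ψ, homConj Γ G φ ψ → P φ → P ψ) (h : ∀ φ, P φ → ¬Q φ) :
    ksRestrict G Γ (fun φ => P φ ∨ Q φ) = ksRestrict G Γ P + ksRestrict G Γ Q := by
  simp only [ksRestrict_eq_card_image, Set.ofPred_or, Set.image_union, Nat.card_coe_set_eq]
  refine Set.ncard_union_eq (Set.disjoint_left.mpr ?_)
  rintro _ ⟨φ, hφ, rfl⟩ ⟨ψ, hψ, hψφ⟩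
  exact h ψ (hP φ ψ (Quotient.exact hψφ.symm) hφ) hψ

theorem ksSub_eq_ksRestrict (H : Type*) [Group H] :
    ksSub G H Γ = ksRestrict G Γ fun φ => ∃ K : Subgroup G, Nonempty (K ≃* H) ∧ φ.range ≤ K :=
  rfl

theorem ksRestrict_card_range_eq_one : ksRestrict G Γ (fun φ => Nat.card φ.range = 1) = 1 := by
  have h : {φ : Γ →* G | Nat.card φ.range = 1} = {1} := by
    ext φ
    exact Subgroup.card_eq_one.trans MonoidHom.range_eq_bot_iff
  rw [ksRestrict_eq_card_image, h, Set.image_singleton, Nat.card_unique]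

end ConjugacyClasses

section Counting

variable {Γ G : Type*} [Group Γ] [Group G]

theorem conj_comp_injective_of_surjective (hG : Subgroup.center G = ⊥) {φ : Γ →* G}
    (hφ : Function.Surjective φ) :
    Function.Injective fun g : G => (MulAut.conj g).toMonoidHom.comp φ := by
  intro g h hgh
  have hcenter : h⁻¹ * g ∈ Subgroup.center G := Subgroup.mem_center_iff.mpr fun y => by
    obtain ⟨x, rfl⟩ := hφ y
    have hx : g * φ x * g⁻¹ = h * φ x * h⁻¹ := DFunLike.congr_fun hgh x
    calc φ x * (h⁻¹ * g) = h⁻¹ * (h * φ x * h⁻¹) * g := by group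
      _ = h⁻¹ * g * φ x := by rw [← hx]; group
  rw [hG, Subgroup.mem_bot, inv_mul_eq_one] at hcenter
  exact hcenter.symm

/-- When the center is trivial, conjugation acts freely on surjective homomorphisms. -/
theorem card_surjective_eq_mul_ksRestrict (hG : Subgroup.center G = ⊥) :
    Nat.card {φ : Γ →* G // Function.Surjective φ} =
      Nat.card G * ksRestrict G Γ fun φ => Function.Surjective φ := by
  set s := (homConj Γ G).comap (Subtype.val : {φ : Γ →* G // Function.Surjective φ} → Γ →* G)
  let F : G × Quotient s → {φ : Γ →* G // Function.Surjective φ} := fun p =>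
    ⟨(MulAut.conj p.1).toMonoidHom.comp p.2.out.1, (MulAut.conj p.1).surjective.comp p.2.out.2⟩
  have hF : Function.Bijective F := by
    constructor
    · rintro ⟨g₁, q₁⟩ ⟨g₂, q₂⟩ h
      have hval : (MulAut.conj g₁).toMonoidHom.comp q₁.out.1 =
          (MulAut.conj g₂).toMonoidHom.comp q₂.out.1 := congrArg Subtype.val h
      obtain rfl : q₁ = q₂ := by
        have h₂ := (homConj Γ G).symm (homConj_conj_comp g₂ q₂.out.1)
        rw [← hval] at h₂
        rw [← q₁.out_eq, ← q₂.out_eq]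
        exact Quotient.sound ((homConj Γ G).trans (homConj_conj_comp g₁ _) h₂)
      obtain rfl := conj_comp_injective_of_surjective hG q₁.out.2 hval
      rfl
    · intro φ
      obtain ⟨g, hg⟩ := homConj_iff.mp (Quotient.mk_out (s := s) φ)
      exact ⟨(g, Quotient.mk s φ), Subtype.ext hg.symm⟩
  rw [← Nat.card_congr (Equiv.ofBijective F hF), Nat.card_prod]
  rfl

def monoidHomEquivRangeLe (K : Subgroup G) : (Γ →* K) ≃ {φ : Γ →* G // φ.range ≤ K} where
  toFun ψ := ⟨K.subtype.comp ψ, by rintro _ ⟨x, rfl⟩; exact (ψ x).2⟩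
  invFun φ := φ.1.codRestrict K fun x => φ.2 ⟨x, rfl⟩
  left_inv _ := rfl
  right_inv _ := rfl

theorem card_range_le_eq_card_monoidHom {H : Type*} [Group H] {K : Subgroup G} (e : K ≃* H) :
    Nat.card {φ : Γ →* G // φ.range ≤ K} = Nat.card (Γ →* H) :=
  Nat.card_congr ((monoidHomEquivRangeLe K).symm.trans (MulEquiv.monoidHomCongrRightEquiv e))

theorem card_range_eq_of_card_prime {p : ℕ} [Fact p.Prime] [Finite (Γ →* G)] {K : Subgroup G}
    (hK : Nat.card K = p) :
    Nat.card {φ : Γ →* G // φ.range = K} = Nat.card (Γ →* Multiplicative (ZMod p)) - 1 := by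
  have : Finite K := Nat.finite_of_card_ne_zero (hK ▸ (Fact.out : p.Prime).ne_zero)
  have hle : ∀ φ : Γ →* G, φ.range ≤ K ↔ φ.range = K ∨ φ = 1 := by
    refine fun φ => ⟨fun h => ?_, ?_⟩
    · rcases (Fact.out : p.Prime).eq_one_or_self_of_dvd _
        ((Subgroup.card_dvd_of_le h).trans hK.dvd) with h1 | hp
      · exact .inr (MonoidHom.range_eq_bot_iff.mp (Subgroup.card_eq_one.mp h1))
      · exact .inl (Subgroup.eq_of_le_of_card_ge h (hK ▸ hp.ge))
    · rintro (h | rfl)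
      · exact h.le
      · rw [MonoidHom.range_one]
        exact bot_le
  have hdisj : ∀ φ : Γ →* G, φ.range = K → φ ≠ 1 := by
    rintro φ h rfl
    rw [MonoidHom.range_one, eq_comm, ← Subgroup.card_eq_one, hK] at h
    exact (Fact.out : p.Prime).ne_one h
  have hcard := card_range_le_eq_card_monoidHom (Γ := Γ)
    (mulEquivOfPrimeCardEq (G' := Multiplicative (ZMod p)) hK (by simp))
  rw [Nat.card_congr (Equiv.subtypeEquivRight hle), Nat.card_subtype_or_of_disjoint hdisj,
    Nat.card_unique (α := {φ : Γ →* G // φ = 1})] at hcard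
  omega

theorem card_range_card_eq_prime {p : ℕ} [Fact p.Prime] [Finite G] [Finite (Γ →* G)] :
    Nat.card {φ : Γ →* G // Nat.card φ.range = p} =
      Nat.card {K : Subgroup G // Nat.card K = p} *
        (Nat.card (Γ →* Multiplicative (ZMod p)) - 1) := by
  have := Fintype.ofFinite {K : Subgroup G // Nat.card K = p}
  rw [← Nat.card_congr (Equiv.sigmaSubtypeFiberEquivSubtype MonoidHom.range
      (p := fun φ : Γ →* G => Nat.card φ.range = p) (q := fun K => Nat.card K = p)
      fun _ => Iff.rfl),
    Nat.card_sigma, Finset.sum_congr rfl fun K _ => card_range_eq_of_card_prime K.2,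
    Finset.sum_const, Finset.card_univ, smul_eq_mul, ← Nat.card_eq_fintype_card]

end Counting

namespace A4

open alternatingGroup MulAction

theorem card_eq : Nat.card A4 = 12 := card_of_card_eq_four (Nat.card_fin 4)

theorem card_kleinFour : Nat.card (kleinFour (Fin 4)) = 4 :=
  kleinFour_card_of_card_eq_four (Nat.card_fin 4)

theorem le_kleinFour_iff (K : Subgroup A4) : K ≤ kleinFour (Fin 4) ↔ Nat.card K ∣ 4 := by
  refine ⟨fun h => (Subgroup.card_dvd_of_le h).trans card_kleinFour.dvd, fun h => ?_⟩
  obtain ⟨S, hS⟩ := (IsPGroup.of_card_dvd_pow (p := 2) (n := 2) h).exists_le_sylow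
  rwa [two_sylow_eq_kleinFour_of_card_eq_four (Nat.card_fin 4) S] at hS

/-- A subgroup of index two has abelian quotient, so it would contain the commutator subgroup,
which is the Klein four-group. -/
theorem card_subgroup_ne_six (K : Subgroup A4) : Nat.card K ≠ 6 := by
  intro hK
  have hindex : K.index = 2 := by
    have := K.index_mul_card
    rw [hK, card_eq] at this
    omega
  have := Subgroup.normal_of_index_eq_two hindex
  have : IsCyclic (A4 ⧸ K) := isCyclic_of_prime_card (p := 2) hindex
  have hcomm : commutator A4 ≤ K :=
    Subgroup.Normal.quotient_commutative_iff_commutator_le.mp IsCyclic.isMulCommutative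
  rw [← kleinFour_eq_commutator (Nat.card_fin 4)] at hcomm
  have := Subgroup.card_dvd_of_le hcomm
  rw [card_kleinFour, hK] at this
  norm_num at this

theorem card_subgroup_cases (K : Subgroup A4) :
    Nat.card K ∣ 4 ∨ Nat.card K = 3 ∨ Nat.card K = 12 := by
  have hdvd : Nat.card K ∣ 12 := card_eq ▸ K.card_subgroup_dvd_card
  have h6 := card_subgroup_ne_six K
  have := Nat.le_of_dvd (by norm_num) hdvd
  interval_cases Nat.card K <;> omega

theorem not_eq_three_or_twelve_of_dvd_four {n : ℕ} (h : n ∣ 4) : ¬(n = 3 ∨ n = 12) := by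
  rintro (rfl | rfl) <;> norm_num at h

theorem card_stabilizer (i : Fin 4) : Nat.card (stabilizer A4 i) = 3 := by
  rw [Nat.card_eq_fintype_card]
  revert i
  decide

theorem stabilizer_injective : Function.Injective (stabilizer A4 : Fin 4 → Subgroup A4) := by
  have key : ∀ i j : Fin 4, (∀ g : A4, g • i = i ↔ g • j = j) → i = j := by decide
  exact fun i j h => key i j fun g => by rw [← mem_stabilizer_iff, h, mem_stabilizer_iff]

theorem exists_stabilizer_eq {K : Subgroup A4} (hK : Nat.card K = 3) :
    ∃ i : Fin 4, stabilizer A4 i = K := by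
  have : Finite K := Nat.finite_of_card_ne_zero (by omega)
  have : Nontrivial K := Finite.one_lt_card_iff_nontrivial.mp (by omega)
  obtain ⟨g, hgK, hg1⟩ := K.exists_ne_one_of_nontrivial
  have hzK := Subgroup.zpowers_eq_of_card_prime hK hgK hg1
  have hg3 : g ^ 3 = 1 := by
    rw [← hK, ← hzK, Nat.card_zpowers]
    exact pow_orderOf_eq_one g
  -- `g` is a 3-cycle, so it fixes a point
  have hfix : ∀ g : A4, g ^ 3 = 1 → ∃ i : Fin 4, g • i = i := by decide
  obtain ⟨i, hi⟩ := hfix g hg3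
  exact ⟨i, (Subgroup.zpowers_eq_of_card_prime (card_stabilizer i) hi hg1).symm.trans hzK⟩

theorem card_subgroups_card_eq_three : Nat.card {K : Subgroup A4 // Nat.card K = 3} = 4 := by
  let f : Fin 4 → {K : Subgroup A4 // Nat.card K = 3} := fun i =>
    ⟨stabilizer A4 i, card_stabilizer i⟩
  have hf : Function.Bijective f :=
    ⟨fun i j h => stabilizer_injective (congrArg Subtype.val h), fun K =>
      (exists_stabilizer_eq K.2).imp fun _ h => Subtype.ext h⟩
  rw [← Nat.card_congr (Equiv.ofBijective f hf), Nat.card_fin]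

variable {Γ : Type*} [Group Γ]

theorem ksSub_V4_eq : ksSub A4 V4 Γ = ksRestrict A4 Γ fun φ => Nat.card φ.range ∣ 4 := by
  refine ksRestrict_congr fun φ => ⟨?_, fun h => ?_⟩
  · rintro ⟨K, ⟨e⟩, hle⟩
    have hK : Nat.card K = 4 := (Nat.card_congr e.toEquiv).trans IsKleinFour.card_four
    exact (Subgroup.card_dvd_of_le hle).trans hK.dvd
  · have := kleinFour_isKleinFour (Nat.card_fin 4)
    exact ⟨kleinFour (Fin 4), IsKleinFour.nonempty_mulEquiv, (le_kleinFour_iff _).mpr h⟩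

theorem ksSub_Z3_eq [Finite (Γ →* A4)] :
    ksSub A4 Z3 Γ = ksRestrict A4 Γ (fun φ => Nat.card φ.range = 3) + 1 := by
  have hZ3 : Nat.card Z3 = 3 := by simp
  rw [ksSub_eq_ksRestrict, ← ksRestrict_card_range_eq_one (G := A4) (Γ := Γ),
    ← ksRestrict_or (fun _ _ h hφ => (card_range_eq_of_homConj h).trans hφ) (by omega)]
  refine ksRestrict_congr fun φ => ⟨?_, ?_⟩
  · rintro ⟨K, ⟨e⟩, hle⟩
    have hK : Nat.card K = 3 := (Nat.card_congr e.toEquiv).trans hZ3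
    exact (Nat.prime_three.eq_one_or_self_of_dvd _
      ((Subgroup.card_dvd_of_le hle).trans hK.dvd)).symm
  · rintro (h | h)
    · exact ⟨φ.range, ⟨mulEquivOfPrimeCardEq h hZ3⟩, le_rfl⟩
    · refine ⟨stabilizer A4 0, ⟨mulEquivOfPrimeCardEq (card_stabilizer 0) hZ3⟩, ?_⟩
      rw [Subgroup.card_eq_one.mp h]
      exact bot_le

theorem ks_eq [Finite (Γ →* A4)] :
    ks A4 Γ = ksRestrict A4 Γ (fun φ => Nat.card φ.range ∣ 4) +
      ksRestrict A4 Γ (fun φ => Nat.card φ.range = 3) +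
        ksRestrict A4 Γ (fun φ => Nat.card φ.range = 12) := by
  rw [ks_eq_ksRestrict_true,
    ksRestrict_congr fun φ => (iff_true_intro (card_subgroup_cases φ.range)).symm,
    ksRestrict_or (fun _ _ h hφ => card_range_eq_of_homConj h ▸ hφ)
      fun _ => not_eq_three_or_twelve_of_dvd_four,
    ksRestrict_or (fun _ _ h hφ => (card_range_eq_of_homConj h).trans hφ) (by omega),
    add_assoc]

theorem card_monoidHom_eq [Finite (Γ →* A4)] :
    Nat.card (Γ →* A4) = Nat.card (Γ →* V4) + 4 * (Nat.card (Γ →* Z3) - 1) +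
      12 * ksRestrict A4 Γ (fun φ => Nat.card φ.range = 12) := by
  have := kleinFour_isKleinFour (Nat.card_fin 4)
  have hsplit : Nat.card {φ : Γ →* A4 // Nat.card φ.range ∣ 4 ∨ Nat.card φ.range = 3 ∨
      Nat.card φ.range = 12} = Nat.card (Γ →* A4) :=
    Nat.card_congr (Equiv.subtypeUnivEquiv fun φ => card_subgroup_cases φ.range)
  rw [Nat.card_subtype_or_of_disjoint fun _ => not_eq_three_or_twelve_of_dvd_four,
    Nat.card_subtype_or_of_disjoint fun _ h => by omega] at hsplit
  have hV : Nat.card {φ : Γ →* A4 // Nat.card φ.range ∣ 4} =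
      Nat.card {φ : Γ →* A4 // φ.range ≤ kleinFour (Fin 4)} :=
    Nat.card_congr (Equiv.subtypeEquivRight fun φ => (le_kleinFour_iff φ.range).symm)
  obtain ⟨e⟩ : Nonempty (kleinFour (Fin 4) ≃* V4) := IsKleinFour.nonempty_mulEquiv
  have hsurj : ∀ φ : Γ →* A4, Function.Surjective φ ↔ Nat.card φ.range = 12 := fun φ => by
    rw [← MonoidHom.range_eq_top, ← Subgroup.card_eq_iff_eq_top, card_eq]
  rw [← hsplit, hV, card_range_le_eq_card_monoidHom e, card_range_card_eq_prime,
    card_subgroups_card_eq_three, ← Nat.card_congr (Equiv.subtypeEquivRight hsurj),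
    card_surjective_eq_mul_ksRestrict (center_eq_bot (by simp)), card_eq, ksRestrict_congr hsurj,
    add_assoc]

end A4

theorem statement_1 (Γ : Type*) [Group Γ] (hΓ : Group.FG Γ) :
    (ks A4 Γ : ℚ) = (ksSub A4 V4 Γ : ℚ) + (ksSub A4 Z3 Γ : ℚ) - 1 +
      ((ksw A4 Γ : ℚ) - 4 * ((Nat.card (Γ →* Z3) : ℚ) - 1) - (Nat.card (Γ →* V4) : ℚ)) / 12 := by
  have := hΓ.finite_monoidHom A4
  have := hΓ.finite_monoidHom Z3
  have hZ3 : 1 ≤ Nat.card (Γ →* Z3) := Nat.card_pos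
  rw [ksw, A4.ks_eq, A4.ksSub_V4_eq, A4.ksSub_Z3_eq, A4.card_monoidHom_eq]
  push_cast [Nat.cast_sub hZ3]
  ring
end

section
/- Let G be a finite group and H an abelian subgroup of G with |H| ≥ 2 such that (i) every subgroup of G isomorphic to H is conjugate to H, and (ii) for every nontrivial element h of H, the centralizer of h in G equals H. Let n_H be the number of conjugacy classes of G that contain an element of H. Then for every g ≥ 1: the number of homomorphisms from ℤ^g to H equals |H|^g, and the number of conjugacy classes of homomorphisms from ℤ^g to G whose image is contained in some subgroup of G isomorphic to H equals (n_H − 1)·(|H|^g − |H|)/(|H| − 1) + n_H. -/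
/-!
Write `N` for the normalizer of `H`. Because the centralizer of every nontrivial element of `H`
is `H`, an element of `G` that conjugates a nontrivial element of `H` into `H` lies in `N`
(it carries one centralizer onto the other). Together with (i) this identifies the `G`-classes
of homomorphisms into conjugates of `H` with the `N`-orbits on `Hom(Γ, H)`, and the classes of
`G` meeting `H` with the `N`-orbits on `H`. In both actions the identity is fixed and every
other point has stabilizer exactly `H`, so Burnside's lemma gives
`k · |N| = |N| + (|Hom(Γ, H)| - 1) · |H|` for the number `k` of orbits; taking `Γ = ℤ^g`,
where `|Hom(Γ, H)| = |H|^g`, and eliminating `|N|` against the count for the elements of `H`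
yields the formula.
-/

open MulAction Subgroup

section Counting

variable {N X : Type*} [Group N] [MulAction N X]

theorem MulAction.card_orbitRel_quotient_mul_card_eq_sum [Fintype X] [Finite N] :
    Nat.card (orbitRel.Quotient N X) * Nat.card N = ∑ x : X, Nat.card (stabilizer N x) := by
  rw [← Nat.card_prod, ← Nat.card_sigma]
  refine Nat.card_congr (Equiv.symm ?_)
  calc (Σ x : X, stabilizer N x) ≃ {p : X × N // p.2 • p.1 = p.1} :=
        (Equiv.subtypeProdEquivSigmaSubtype fun x n => n ∈ stabilizer N x).symm
    _ ≃ {p : N × X // p.1 • p.2 = p.2} := (Equiv.prodComm X N).subtypeEquiv fun _ => Iff.rfl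
    _ ≃ Σ n : N, fixedBy X n := Equiv.subtypeProdEquivSigmaSubtype fun n x => n • x = x
    _ ≃ orbitRel.Quotient N X × N := sigmaFixedByEquivOrbitsProdGroup N X

theorem MulAction.card_orbitRel_quotient_mul_card_add_card [Finite X] [Finite N]
    {K : Subgroup N} {x₀ : X} (h₀ : ∀ n : N, n • x₀ = x₀)
    (hK : ∀ x ≠ x₀, stabilizer N x = K) :
    Nat.card (orbitRel.Quotient N X) * Nat.card N + Nat.card K =
      Nat.card N + Nat.card X * Nat.card K := by
  classical
  have := Fintype.ofFinite X
  have hstab₀ : stabilizer N x₀ = ⊤ := eq_top_iff.mpr fun n _ => h₀ n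
  have hcompl : ∑ x ∈ {x₀}ᶜ, Nat.card (stabilizer N x) = ∑ x ∈ {x₀}ᶜ, Nat.card K :=
    Finset.sum_congr rfl fun x hx => by rw [hK x (by simpa using hx)]
  have hconst : Nat.card X * Nat.card K = Nat.card K + ∑ x ∈ {x₀}ᶜ, Nat.card K := by
    rw [Nat.card_eq_fintype_card, ← Finset.card_univ, ← smul_eq_mul, ← Finset.sum_const,
      Fintype.sum_eq_add_sum_compl x₀]
  rw [card_orbitRel_quotient_mul_card_eq_sum, Fintype.sum_eq_add_sum_compl x₀, hstab₀, card_top,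
    hcompl, hconst]
  ring

theorem MulAction.card_orbitRel_quotient_eq_of_surjective {β : Type*} (f : X → β)
    (hf : Function.Surjective f) (hker : ∀ a b, f a = f b ↔ ∃ n : N, n • a = b) :
    Nat.card (orbitRel.Quotient N X) = Nat.card β :=
  Nat.card_congr <| (Quotient.congrRight fun a b => by
    rw [orbitRel_apply, mem_orbit_iff, Setoid.ker_def, eq_comm, hker]).trans
    (Setoid.quotientKerEquivOfSurjective f hf)

end Counting

instance {M Γ A : Type*} [Monoid M] [MulOneClass Γ] [Monoid A]
    [MulDistribMulAction M A] : MulAction M (Γ →* A) where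
  smul m φ := (MulDistribMulAction.toMonoidHom A m).comp φ
  one_smul φ := by ext; exact one_smul M (φ _)
  mul_smul m m' φ := by ext; exact mul_smul m m' (φ _)

section Fusion

variable {G Γ : Type*} [Group G] [Group Γ] {H : Subgroup G}

theorem mem_normalizer_of_conj_mem (hcent : ∀ a ∈ H, a ≠ 1 → centralizer {a} = H)
    {a c : G} (ha : a ∈ H) (ha1 : a ≠ 1) (hc : c * a * c⁻¹ ∈ H) :
    c ∈ normalizer (H : Set G) := by
  have hca1 : c * a * c⁻¹ ≠ 1 := conj_eq_one_iff.not.mpr ha1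
  refine mem_normalizer_iff.mpr fun x => ?_
  calc x ∈ H ↔ Commute x a := by rw [← hcent a ha ha1, mem_centralizer_singleton_iff]; rfl
    _ ↔ Commute (c * x * c⁻¹) (c * a * c⁻¹) := (Commute.conj_iff c).symm
    _ ↔ c * x * c⁻¹ ∈ H := by rw [← hcent _ hc hca1, mem_centralizer_singleton_iff]; rfl

theorem stabilizer_normalizer_eq_subgroupOf (hcent : ∀ a ∈ H, a ≠ 1 → centralizer {a} = H)
    {a : H} (ha : a ≠ 1) :
    stabilizer (normalizer (H : Set G)) a = H.subgroupOf (normalizer (H : Set G)) := by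
  ext n
  have hC : (n : G) ∈ H ↔ (n : G) * a = a * n := by
    rw [← mem_centralizer_singleton_iff, hcent a a.2 (by simpa using ha)]
  rw [mem_stabilizer_iff, mem_subgroupOf, hC, Subtype.ext_iff]
  exact mul_inv_eq_iff_eq_mul

theorem stabilizer_normalizer_hom_eq_subgroupOf
    (hcent : ∀ a ∈ H, a ≠ 1 → centralizer {a} = H) {φ : Γ →* H} (hφ : φ ≠ 1) :
    stabilizer (normalizer (H : Set G)) φ = H.subgroupOf (normalizer (H : Set G)) := by
  obtain ⟨x₀, hx₀⟩ : ∃ x, φ x ≠ 1 := DFunLike.ne_iff.mp hφ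
  ext n
  rw [mem_stabilizer_iff]
  constructor
  · intro h
    rw [← stabilizer_normalizer_eq_subgroupOf hcent hx₀]
    exact DFunLike.congr_fun h x₀
  · intro hn
    ext x
    by_cases hx : φ x = 1
    · exact congrArg Subtype.val (show n • φ x = φ x by rw [hx, smul_one])
    · rw [← stabilizer_normalizer_eq_subgroupOf hcent hx] at hn
      exact congrArg Subtype.val hn

theorem exists_normalizer_smul_eq_of_conj (hcent : ∀ a ∈ H, a ≠ 1 → centralizer {a} = H)
    {a b : H} {c : G} (h : c * a * c⁻¹ = b) : ∃ n : normalizer (H : Set G), n • a = b := by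
  by_cases ha : a = 1
  · subst ha
    exact ⟨1, Subtype.ext (by simpa using h)⟩
  · exact ⟨⟨c, mem_normalizer_of_conj_mem hcent a.2 (by simpa using ha) (h ▸ b.2)⟩,
      Subtype.ext h⟩

theorem exists_normalizer_smul_eq_of_conj_hom (hcent : ∀ a ∈ H, a ≠ 1 → centralizer {a} = H)
    {φ ψ : Γ →* H} {c : G} (h : ∀ x, c * φ x * c⁻¹ = ψ x) :
    ∃ n : normalizer (H : Set G), n • φ = ψ := by
  by_cases hφ : φ = 1
  · subst hφ
    exact ⟨1, MonoidHom.ext fun x => Subtype.ext (by simpa using h x)⟩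
  · obtain ⟨x₀, hx₀⟩ : ∃ x, φ x ≠ 1 := DFunLike.ne_iff.mp hφ
    exact ⟨⟨c, mem_normalizer_of_conj_mem hcent (φ x₀).2 (by simpa using hx₀)
      (h x₀ ▸ (ψ x₀).2)⟩,
      MonoidHom.ext fun x => Subtype.ext (h x)⟩

end Fusion

section Classes

variable {G Γ : Type*} [Group G] [Group Γ] {H : Subgroup G}

theorem card_conjClasses_meeting_eq_card_orbitRel_quotient
    (hcent : ∀ a ∈ H, a ≠ 1 → centralizer {a} = H) :
    Nat.card {c : ConjClasses G // ∃ h ∈ H, c = ConjClasses.mk h} =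
      Nat.card (orbitRel.Quotient (normalizer (H : Set G)) H) := by
  refine (card_orbitRel_quotient_eq_of_surjective
    (fun a : H => ⟨ConjClasses.mk a, a, a.2, rfl⟩) ?_ fun a b => ?_).symm
  · rintro ⟨_, a, ha, rfl⟩
    exact ⟨⟨a, ha⟩, rfl⟩
  · rw [Subtype.mk.injEq, ConjClasses.mk_eq_mk_iff_isConj, isConj_iff]
    constructor
    · rintro ⟨c, hc⟩
      exact exists_normalizer_smul_eq_of_conj hcent hc
    · rintro ⟨n, rfl⟩
      exact ⟨n, rfl⟩

theorem ksSub_eq_card_orbitRel_quotient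
    (hconj : ∀ K : Subgroup G, Nonempty (K ≃* H) →
      ∃ g : G, K = Subgroup.map (MulAut.conj g).toMonoidHom H)
    (hcent : ∀ a ∈ H, a ≠ 1 → centralizer {a} = H) :
    ksSub G H Γ = Nat.card (orbitRel.Quotient (normalizer (H : Set G)) (Γ →* H)) := by
  refine (card_orbitRel_quotient_eq_of_surjective
    (fun φ : Γ →* H => Quotient.mk _
      ⟨H.subtype.comp φ, H, ⟨MulEquiv.refl H⟩, fun _ ⟨x, hx⟩ => hx ▸ (φ x).2⟩) ?_
    fun φ ψ => ?_).symm
  · rintro ⟨ψ, K, hK, hψ⟩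
    obtain ⟨c, rfl⟩ := hconj K hK
    have hψH : ∀ x, c⁻¹ * ψ x * c⁻¹⁻¹ ∈ H := fun x => by
      obtain ⟨h, hh, hhψ⟩ := hψ ⟨x, rfl⟩
      rw [← hhψ]
      simpa [mul_assoc] using hh
    refine ⟨((MulAut.conj c⁻¹).toMonoidHom.comp ψ).codRestrict H hψH,
      Quotient.sound ⟨c, fun x => ?_⟩⟩
    simp [mul_assoc]
  · rw [Quotient.eq]
    constructor
    · rintro ⟨c, hc⟩
      exact exists_normalizer_smul_eq_of_conj_hom hcent fun x => (hc x).symm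
    · rintro ⟨n, rfl⟩
      exact ⟨n, fun x => rfl⟩

theorem card_subgroupOf_normalizer (H : Subgroup G) :
    Nat.card (H.subgroupOf (normalizer (H : Set G))) = Nat.card H :=
  Nat.card_congr (subgroupOfEquivOfLe le_normalizer).toEquiv

theorem card_conjClasses_meeting_mul_card_normalizer_add_card [Finite G]
    (hcent : ∀ a ∈ H, a ≠ 1 → centralizer {a} = H) :
    Nat.card {c : ConjClasses G // ∃ h ∈ H, c = ConjClasses.mk h} *
      Nat.card (normalizer (H : Set G)) + Nat.card H =
      Nat.card (normalizer (H : Set G)) + Nat.card H * Nat.card H := by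
  have := card_orbitRel_quotient_mul_card_add_card smul_one
    fun (a : H) ha => stabilizer_normalizer_eq_subgroupOf hcent ha
  rwa [card_subgroupOf_normalizer, ← card_conjClasses_meeting_eq_card_orbitRel_quotient hcent]
    at this

theorem ksSub_mul_card_normalizer_add_card [Finite G] [Finite (Γ →* H)]
    (hconj : ∀ K : Subgroup G, Nonempty (K ≃* H) →
      ∃ g : G, K = Subgroup.map (MulAut.conj g).toMonoidHom H)
    (hcent : ∀ a ∈ H, a ≠ 1 → centralizer {a} = H) :
    ksSub G H Γ * Nat.card (normalizer (H : Set G)) + Nat.card H =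
      Nat.card (normalizer (H : Set G)) + Nat.card (Γ →* H) * Nat.card H := by
  have := card_orbitRel_quotient_mul_card_add_card (fun n => MonoidHom.ext fun _ => smul_one n)
    fun (φ : Γ →* H) hφ => stabilizer_normalizer_hom_eq_subgroupOf hcent hφ
  rwa [card_subgroupOf_normalizer, ← ksSub_eq_card_orbitRel_quotient hconj hcent] at this

end Classes

theorem card_monoidHom_zg (g : ℕ) (M : Type*) [CommGroup M] :
    Nat.card (Zg g →* M) = Nat.card M ^ g := by
  rw [Nat.card_congr (MonoidHom.toAdditiveRight.trans (addMonoidHomLequivInt ℤ).toEquiv |>.trans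
    (LinearEquiv.piRing ℤ (Additive M) (Fin g) ℤ).toEquiv), Nat.card_fun, Nat.card_fin]
  rfl

theorem statement_3_general (G : Type*) [Group G] [Finite G] (H : Subgroup G)
    (hab : IsMulCommutative H) (hcard : 2 ≤ Nat.card H)
    (hconj : ∀ K : Subgroup G, Nonempty (K ≃* H) →
      ∃ g : G, K = Subgroup.map (MulAut.conj g).toMonoidHom H)
    (hcent : ∀ h : G, h ∈ H → h ≠ 1 → Subgroup.centralizer {h} = H)
    (nH : ℕ) (hnH : nH = Nat.card {c : ConjClasses G // ∃ h ∈ H, c = ConjClasses.mk h})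
    (g : ℕ) :
    Nat.card (Zg g →* H) = Nat.card H ^ g ∧
    (ksSub G H (Zg g) : ℚ) =
      ((nH : ℚ) - 1) * (((Nat.card H : ℚ) ^ g - (Nat.card H : ℚ)) / ((Nat.card H : ℚ) - 1))
        + (nH : ℚ) := by
  have hhom := open scoped IsMulCommutative in card_monoidHom_zg g H
  have : Finite (Zg g →* H) :=
    Nat.finite_of_card_ne_zero (hhom ▸ pow_ne_zero g (by omega))
  refine ⟨hhom, ?_⟩
  have hks := ksSub_mul_card_normalizer_add_card (Γ := Zg g) hconj hcent
  have hclasses := card_conjClasses_meeting_mul_card_normalizer_add_card hcent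
  rw [hhom] at hks
  rw [← hnH] at hclasses
  qify at hks hclasses
  have hn : (Nat.card (normalizer (H : Set G)) : ℚ) ≠ 0 := by exact_mod_cast Nat.card_pos.ne'
  have hh : (Nat.card H : ℚ) - 1 ≠ 0 := by
    have : (2 : ℚ) ≤ Nat.card H := by exact_mod_cast hcard
    linarith
  field_simp
  apply mul_right_cancel₀ hn
  linear_combination ((Nat.card H : ℚ) - 1) * hks - ((Nat.card H : ℚ) ^ g - 1) * hclasses

theorem statement_3 (G : Type*) [Group G] [Finite G] (H : Subgroup G)
    (hab : IsMulCommutative H) (hcard : 2 ≤ Nat.card H)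
    (hconj : ∀ K : Subgroup G, Nonempty (K ≃* H) →
      ∃ g : G, K = Subgroup.map (MulAut.conj g).toMonoidHom H)
    (hcent : ∀ h : G, h ∈ H → h ≠ 1 → Subgroup.centralizer {h} = H)
    (nH : ℕ) (hnH : nH = Nat.card {c : ConjClasses G // ∃ h ∈ H, c = ConjClasses.mk h})
    (g : ℕ) (hg : 1 ≤ g) :
    Nat.card (Zg g →* H) = Nat.card H ^ g ∧
    (ksSub G H (Zg g) : ℚ) =
      ((nH : ℚ) - 1) * (((Nat.card H : ℚ) ^ g - (Nat.card H : ℚ)) / ((Nat.card H : ℚ) - 1))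
        + (nH : ℚ) :=
  statement_3_general G H hab hcard hconj hcent nH hnH g
end

section
/- Every subgroup of the alternating group A5 either is abelian or has trivial centralizer in A5, any two distinct maximal abelian subgroups of A5 intersect trivially, and the maximal abelian subgroups of A5 are exactly ten subgroups isomorphic to ℤ3, five subgroups isomorphic to V4, and six subgroups isomorphic to ℤ5. -/
/-!
In `A5` the centralizer of every nontrivial element has order 3, 4 or 5, hence is abelian
(a group of order `p` or `p²`): `A5` is a CA-group. In a CA-group a maximal abelian subgroup is
the centralizer of each of its nontrivial elements, so the maximal abelian subgroups are the
centralizers of nontrivial elements and partition the nontrivial elements. Since no two of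
3, 4, 5 divide each other, the abelian subgroups of these orders are exactly the maximal ones;
counting the 20, 15 and 24 nontrivial elements with centralizer of order 3, 4 and 5 gives
20 / 2 = 10, 15 / 3 = 5 and 24 / 4 = 6 of them.
-/

open Subgroup Finset

section CAGroup

variable {G : Type*} [Group G]

def IsCAGroup (G : Type*) [Group G] : Prop :=
  ∀ x : G, x ≠ 1 → IsMulCommutative (centralizer {x} : Subgroup G)

theorem isMulCommutative_of_le {K L : Subgroup G} (hKL : K ≤ L) [IsMulCommutative L] :
    IsMulCommutative K :=
  le_centralizer_iff_isMulCommutative.mp <|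
    hKL.trans <| (le_centralizer L).trans <| centralizer_le hKL

theorem le_centralizer_singleton {K : Subgroup G} [IsMulCommutative K] {x : G} (hx : x ∈ K) :
    K ≤ centralizer {x} :=
  (le_centralizer K).trans <| centralizer_le <| Set.singleton_subset_iff.mpr hx

theorem IsMaximalAbelian.ne_bot [Nontrivial G] {K : Subgroup G} (hK : IsMaximalAbelian K) :
    K ≠ ⊥ := by
  obtain ⟨x, hx⟩ := exists_ne (1 : G)
  rintro rfl
  have := hK.2 (zpowers x) (zpowers_isMulCommutative x) bot_le
  exact hx (mem_bot.mp (this ▸ mem_zpowers x))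

namespace IsCAGroup

theorem isMaximalAbelian_centralizer (hG : IsCAGroup G) {x : G} (hx : x ≠ 1) :
    IsMaximalAbelian (centralizer {x} : Subgroup G) := by
  have := hG x hx
  refine ⟨this, fun K hK hle => le_antisymm ?_ hle⟩
  exact le_centralizer_singleton (hle (mem_centralizer_singleton_iff.mpr rfl))

theorem centralizer_eq_of_mem (hG : IsCAGroup G) {K : Subgroup G} (hK : IsMaximalAbelian K)
    {x : G} (hxK : x ∈ K) (hx : x ≠ 1) : centralizer {x} = K :=
  have := hK.1
  hK.2 _ (hG x hx) (le_centralizer_singleton hxK)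

theorem exists_centralizer_eq [Nontrivial G] (hG : IsCAGroup G) {K : Subgroup G}
    (hK : IsMaximalAbelian K) : ∃ x ≠ 1, centralizer {x} = K := by
  obtain ⟨⟨x, hxK⟩, hx⟩ := ne_bot_iff_exists_ne_one.mp hK.ne_bot
  have hx : x ≠ 1 := fun h => hx (Subtype.ext h)
  exact ⟨x, hx, hG.centralizer_eq_of_mem hK hxK hx⟩

theorem isMulCommutative_or_centralizer_eq_bot (hG : IsCAGroup G) (K : Subgroup G) :
    IsMulCommutative K ∨ centralizer (K : Set G) = ⊥ := by
  refine or_iff_not_imp_right.mpr fun hK => ?_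
  obtain ⟨⟨z, hzK⟩, hz⟩ := ne_bot_iff_exists_ne_one.mp hK
  have hz : z ≠ 1 := fun h => hz (Subtype.ext h)
  have := hG z hz
  exact isMulCommutative_of_le fun k hk => mem_centralizer_singleton_iff.mpr (hzK k hk)

theorem inf_eq_bot_of_isMaximalAbelian (hG : IsCAGroup G) {K K' : Subgroup G}
    (hK : IsMaximalAbelian K) (hK' : IsMaximalAbelian K') (hne : K ≠ K') : K ⊓ K' = ⊥ := by
  refine (eq_bot_iff_forall _).mpr fun x hx => by_contra fun hx1 => hne ?_
  rw [← hG.centralizer_eq_of_mem hK (mem_inf.mp hx).1 hx1,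
    hG.centralizer_eq_of_mem hK' (mem_inf.mp hx).2 hx1]

theorem isMaximalAbelian_of_card_centralizer_le [Finite G] (hG : IsCAGroup G) {K : Subgroup G}
    [IsMulCommutative K] {x : G} (hxK : x ∈ K) (hx : x ≠ 1)
    (hcard : Nat.card (centralizer {x} : Subgroup G) ≤ Nat.card K) : IsMaximalAbelian K := by
  rw [eq_of_le_of_card_ge (le_centralizer_singleton hxK) hcard]
  exact hG.isMaximalAbelian_centralizer hx

/-- Each maximal abelian subgroup of order `n` is the centralizer of each of its `n - 1`
nontrivial elements, so these subgroups partition the nontrivial elements `x` with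
`|C(x)| = n`. -/
theorem card_sub_one_mul_card_isMaximalAbelian [Finite G] (hG : IsCAGroup G) (n : ℕ) :
    (n - 1) * Nat.card {K : Subgroup G // IsMaximalAbelian K ∧ Nat.card K = n} =
      Nat.card {x : G // x ≠ 1 ∧ Nat.card (centralizer {x} : Subgroup G) = n} := by
  classical
  let _ := Fintype.ofFinite {K : Subgroup G // IsMaximalAbelian K ∧ Nat.card K = n}
  let e : {x : G // x ≠ 1 ∧ Nat.card (centralizer {x} : Subgroup G) = n} ≃
      Σ K : {K : Subgroup G // IsMaximalAbelian K ∧ Nat.card K = n}, {y : K.1 // y ≠ 1} :=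
    { toFun := fun x => ⟨⟨_, hG.isMaximalAbelian_centralizer x.2.1, x.2.2⟩,
        ⟨⟨x, mem_centralizer_singleton_iff.mpr rfl⟩, fun h => x.2.1 (congrArg Subtype.val h)⟩⟩
      invFun := fun y => ⟨y.2.1, fun h => y.2.2 (Subtype.ext h), by
        rw [hG.centralizer_eq_of_mem y.1.2.1 y.2.1.2 fun h => y.2.2 (Subtype.ext h)]
        exact y.1.2.2⟩
      left_inv := fun _ => rfl
      right_inv := by
        rintro ⟨⟨K, hK, hKn⟩, ⟨⟨y, hyK⟩, hy⟩⟩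
        obtain rfl := hG.centralizer_eq_of_mem hK hyK fun h => hy (Subtype.ext h)
        rfl }
  have hfiber (K : Subgroup G) (hK : Nat.card K = n) : Nat.card {y : K // y ≠ 1} = n - 1 := by
    let _ := Fintype.ofFinite K
    rw [Nat.card_eq_fintype_card, Fintype.card_subtype_compl, Fintype.card_subtype_eq,
      ← Nat.card_eq_fintype_card, hK]
  rw [Nat.card_congr e, Nat.card_sigma, Finset.sum_congr rfl fun K _ => hfiber K.1 K.2.2,
    sum_const, card_univ, smul_eq_mul, mul_comm, Nat.card_eq_fintype_card]

end IsCAGroup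

end CAGroup

section FiniteGroups

variable {G : Type*} [Group G]

theorem card_centralizer_singleton [Fintype G] [DecidableEq G] (x : G) :
    Nat.card (centralizer {x} : Subgroup G) = #{a | a * x = x * a} := by
  rw [← Fintype.card_subtype, ← Nat.card_eq_fintype_card]
  exact Nat.card_congr (Equiv.subtypeEquivRight fun _ => mem_centralizer_singleton_iff)

theorem isMulCommutative_of_card_eq_prime_pow {p n : ℕ} [Fact p.Prime] (hn : n ≤ 2)
    (hG : Nat.card G = p ^ n) : IsMulCommutative G := by
  interval_cases n
  · have : Subsingleton G := (Nat.card_eq_one_iff_unique.mp (by simpa using hG)).1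
    exact ⟨⟨fun a b => Subsingleton.elim _ _⟩⟩
  · have := isCyclic_of_prime_card (by simpa using hG)
    exact IsCyclic.isMulCommutative
  · exact IsPGroup.isMulCommutative_of_card_eq_prime_sq hG

theorem nonempty_mulEquiv_multiplicative_zmod_iff {p : ℕ} [Fact p.Prime] :
    Nonempty (G ≃* Multiplicative (ZMod p)) ↔ Nat.card G = p := by
  refine ⟨fun ⟨e⟩ => (Nat.card_congr e.toEquiv).trans (Nat.card_zmod p), fun h => ?_⟩
  exact ⟨mulEquivOfPrimeCardEq h (Nat.card_zmod p)⟩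

theorem isKleinFour_of_card_eq_four (hcard : Nat.card G = 4) (hsq : ∀ g : G, g ^ 2 = 1) :
    IsKleinFour G where
  card_four := hcard
  exponent_two := by
    have : Finite G := Nat.finite_of_card_ne_zero (by omega)
    have : Nontrivial G := Finite.one_lt_card_iff_nontrivial.mp (by omega)
    have hdvd := Monoid.exponent_dvd_of_forall_pow_eq_one hsq
    refine ((Nat.dvd_prime Nat.prime_two).mp hdvd).resolve_left fun h => ?_
    exact not_subsingleton G (Monoid.exp_eq_one_iff.mp h)

end FiniteGroups

namespace A5

theorem card_centralizer_mem {x : A5} (hx : x ≠ 1) :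
    Nat.card (centralizer {x} : Subgroup A5) ∈ ({3, 4, 5} : Finset ℕ) := by
  rw [card_centralizer_singleton]
  revert x
  decide +kernel

theorem sq_eq_one_of_pow_four_eq_one : ∀ x : A5, x ^ 4 = 1 → x ^ 2 = 1 := by
  decide +kernel

theorem isMulCommutative_of_card_mem {H : Type*} [Group H]
    (h : Nat.card H ∈ ({3, 4, 5} : Finset ℕ)) : IsMulCommutative H := by
  simp only [mem_insert, mem_singleton] at h
  rcases h with h | h | h
  · have := Fact.mk Nat.prime_three
    exact isMulCommutative_of_card_eq_prime_pow (p := 3) (n := 1) one_le_two h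
  · have := Fact.mk Nat.prime_two
    exact isMulCommutative_of_card_eq_prime_pow (p := 2) (n := 2) le_rfl h
  · have := Fact.mk Nat.prime_five
    exact isMulCommutative_of_card_eq_prime_pow (p := 5) (n := 1) one_le_two h

theorem isCAGroup : IsCAGroup A5 := fun _ hx =>
  isMulCommutative_of_card_mem (card_centralizer_mem hx)

/-- No two of the centralizer orders `3, 4, 5` divide each other, so a nontrivial abelian
subgroup of such an order fills the centralizer of each of its nontrivial elements. -/
theorem isMaximalAbelian_iff_card_mem (K : Subgroup A5) :
    IsMaximalAbelian K ↔ Nat.card K ∈ ({3, 4, 5} : Finset ℕ) := by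
  refine ⟨fun hK => ?_, fun hK => ?_⟩
  · obtain ⟨x, hx, rfl⟩ := isCAGroup.exists_centralizer_eq hK
    exact card_centralizer_mem hx
  · have := isMulCommutative_of_card_mem hK
    have : Nontrivial K := Finite.one_lt_card_iff_nontrivial.mp (by simp at hK; omega)
    obtain ⟨⟨x, hxK⟩, hx⟩ := exists_ne (1 : K)
    have hx : x ≠ 1 := fun h => hx (Subtype.ext h)
    have hdvd := card_dvd_of_le (le_centralizer_singleton hxK)
    have hantichain :
        ∀ a ∈ ({3, 4, 5} : Finset ℕ), ∀ b ∈ ({3, 4, 5} : Finset ℕ), a ∣ b → a = b := by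
      decide
    refine isCAGroup.isMaximalAbelian_of_card_centralizer_le hxK hx ?_
    exact (hantichain _ hK _ (card_centralizer_mem hx) hdvd).ge

theorem nonempty_mulEquiv_V4_iff (K : Subgroup A5) : Nonempty (K ≃* V4) ↔ Nat.card K = 4 := by
  refine ⟨fun ⟨e⟩ => (Nat.card_congr e.toEquiv).trans (by simp), fun hK => ?_⟩
  have hsq (y : K) : y ^ 2 = 1 := by
    have h4 : (y : A5) ^ 4 = 1 := by
      simpa [hK] using congrArg Subtype.val (pow_card_eq_one' (x := y))
    exact Subtype.ext (by simpa using sq_eq_one_of_pow_four_eq_one _ h4)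
  have := isKleinFour_of_card_eq_four hK hsq
  exact IsKleinFour.nonempty_mulEquiv

theorem card_sub_one_mul_card_isMaximalAbelian (n : ℕ) :
    (n - 1) * Nat.card {K : Subgroup A5 // IsMaximalAbelian K ∧ Nat.card K = n} =
      #{x : A5 | x ≠ 1 ∧ #{a | a * x = x * a} = n} := by
  rw [isCAGroup.card_sub_one_mul_card_isMaximalAbelian, Nat.card_eq_fintype_card,
    Fintype.card_subtype]
  simp only [card_centralizer_singleton]

end A5

theorem statement_5 :
    (∀ K : Subgroup A5, IsMulCommutative K ∨ Subgroup.centralizer (K : Set A5) = ⊥) ∧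
    (∀ K K' : Subgroup A5, IsMaximalAbelian K → IsMaximalAbelian K' → K ≠ K' → K ⊓ K' = ⊥) ∧
    (∀ K : Subgroup A5, IsMaximalAbelian K →
      (Nonempty (K ≃* Z3) ∨ Nonempty (K ≃* V4) ∨ Nonempty (K ≃* Z5))) ∧
    (∀ K : Subgroup A5, (Nonempty (K ≃* Z3) ∨ Nonempty (K ≃* V4) ∨ Nonempty (K ≃* Z5)) →
      IsMaximalAbelian K) ∧
    Nat.card {K : Subgroup A5 // IsMaximalAbelian K ∧ Nonempty (K ≃* Z3)} = 10 ∧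
    Nat.card {K : Subgroup A5 // IsMaximalAbelian K ∧ Nonempty (K ≃* V4)} = 5 ∧
    Nat.card {K : Subgroup A5 // IsMaximalAbelian K ∧ Nonempty (K ≃* Z5)} = 6 := by
  have := Fact.mk Nat.prime_three
  have := Fact.mk Nat.prime_five
  have hmax (K : Subgroup A5) : IsMaximalAbelian K ↔
      Nonempty (K ≃* Z3) ∨ Nonempty (K ≃* V4) ∨ Nonempty (K ≃* Z5) := by
    rw [A5.isMaximalAbelian_iff_card_mem, nonempty_mulEquiv_multiplicative_zmod_iff,
      A5.nonempty_mulEquiv_V4_iff, nonempty_mulEquiv_multiplicative_zmod_iff]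
    simp only [mem_insert, mem_singleton]
  have hcount (n : ℕ) (P : Subgroup A5 → Prop) (hP : ∀ K, P K ↔ Nat.card K = n) :
      (n - 1) * Nat.card {K : Subgroup A5 // IsMaximalAbelian K ∧ P K} =
        #{x : A5 | x ≠ 1 ∧ #{a | a * x = x * a} = n} := by
    simp only [hP]
    exact A5.card_sub_one_mul_card_isMaximalAbelian n
  have h3 := hcount 3 (fun K => Nonempty (K ≃* Z3)) fun K =>
    nonempty_mulEquiv_multiplicative_zmod_iff (G := K)
  have h4 := hcount 4 (fun K => Nonempty (K ≃* V4)) A5.nonempty_mulEquiv_V4_iff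
  have h5 := hcount 5 (fun K => Nonempty (K ≃* Z5)) fun K =>
    nonempty_mulEquiv_multiplicative_zmod_iff (G := K)
  rw [show #{x : A5 | x ≠ 1 ∧ #{a | a * x = x * a} = 3} = 20 by decide +kernel] at h3
  rw [show #{x : A5 | x ≠ 1 ∧ #{a | a * x = x * a} = 4} = 15 by decide +kernel] at h4
  rw [show #{x : A5 | x ≠ 1 ∧ #{a | a * x = x * a} = 5} = 24 by decide +kernel] at h5
  exact ⟨A5.isCAGroup.isMulCommutative_or_centralizer_eq_bot,
    fun _ _ => A5.isCAGroup.inf_eq_bot_of_isMaximalAbelian, fun K => (hmax K).mp,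
    fun K => (hmax K).mpr, by omega, by omega, by omega⟩
end

section
/- Let Γ be a finitely generated group whose abelianization is a free abelian group of rank g ≥ 1. Then the number of homomorphisms from Γ to A4 satisfies |Hom(Γ, A4)| = 12·ks_{A4}(Γ) − 8·3^g − 3·4^g. -/
/-!
Let `A₄` act on `Hom(Γ, A₄)` by conjugation. A homomorphism is fixed by `σ` exactly when it lands
in the centralizer `C(σ)`, so Burnside's lemma gives
`12 · ks_{A₄}(Γ) = |Hom(Γ, A₄)| + ∑_{σ ≠ 1} |Hom(Γ, C(σ))|`.
In `A₄` the centralizer of a nontrivial element is abelian: it is `V₄` for the three involutions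
and `ℤ₃` for the eight 3-cycles. Homomorphisms into an abelian group factor through the
abelianization `ℤ^g`, so `|Hom(Γ, C(σ))| = |C(σ)|^g`, and the sum is `3 · 4^g + 8 · 3^g`.
-/

open MulAction Subgroup Finset

namespace MonoidHom

variable {Γ G : Type*} [Group Γ] [Group G]

abbrev conjMulAction : MulAction G (Γ →* G) where
  smul σ φ := (MulAut.conj σ).toMonoidHom.comp φ
  one_smul φ := ext fun x => show 1 * φ x * 1⁻¹ = φ x by group
  mul_smul σ τ φ := ext fun x => show σ * τ * φ x * (σ * τ)⁻¹ = σ * (τ * φ x * τ⁻¹) * σ⁻¹ by group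

attribute [local instance] conjMulAction

theorem conj_smul_apply (σ : G) (φ : Γ →* G) (x : Γ) : (σ • φ) x = σ * φ x * σ⁻¹ := rfl

theorem homConj_eq_orbitRel : homConj Γ G = orbitRel G (Γ →* G) := by
  ext φ ψ
  change (∃ σ : G, ∀ x, ψ x = σ * φ x * σ⁻¹) ↔ ∃ σ : G, σ • ψ = φ
  constructor
  · rintro ⟨σ, hσ⟩
    exact ⟨σ⁻¹, ext fun x => by rw [conj_smul_apply, hσ x]; group⟩
  · rintro ⟨σ, rfl⟩
    exact ⟨σ⁻¹, fun x => by rw [conj_smul_apply]; group⟩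

theorem mem_fixedBy_iff_forall_mem_centralizer {σ : G} {φ : Γ →* G} :
    φ ∈ fixedBy (Γ →* G) σ ↔ ∀ x, φ x ∈ centralizer {σ} := by
  simp only [mem_fixedBy, MonoidHom.ext_iff, conj_smul_apply, mul_inv_eq_iff_eq_mul,
    mem_centralizer_singleton_iff]
  exact forall_congr' fun _ => eq_comm

def fixedByEquivCentralizer (σ : G) : fixedBy (Γ →* G) σ ≃ (Γ →* centralizer {σ}) where
  toFun φ := (φ : Γ →* G).codRestrict _ (mem_fixedBy_iff_forall_mem_centralizer.mp φ.2)
  invFun ψ := ⟨(centralizer {σ}).subtype.comp ψ,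
    mem_fixedBy_iff_forall_mem_centralizer.mpr fun x => (ψ x).2⟩
  left_inv _ := rfl
  right_inv _ := rfl

theorem finite_of_fg [Group.FG Γ] [Finite G] : Finite (Γ →* G) := by
  obtain ⟨S, hS, hSfin⟩ := Group.fg_iff.mp ‹Group.FG Γ›
  have := hSfin.to_subtype
  refine Finite.of_injective (fun φ : Γ →* G => fun s : S => φ s) fun φ ψ h => ?_
  exact eq_of_eqOn_dense hS fun x hx => congrFun h ⟨x, hx⟩

theorem ks_mul_card_eq [Fintype G] [DecidableEq G] [Group.FG Γ] :
    ks G Γ * Fintype.card G =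
      Nat.card (Γ →* G) + ∑ σ ∈ univ.erase (1 : G), Nat.card (Γ →* centralizer {σ}) := by
  have := finite_of_fg (Γ := Γ) (G := G)
  have : Fintype (Γ →* G) := Fintype.ofFinite _
  have : Fintype (orbitRel.Quotient G (Γ →* G)) := Fintype.ofFinite _
  have : ∀ σ : G, Fintype (fixedBy (Γ →* G) σ) := fun _ => Fintype.ofFinite _
  have fixedBy_one : Fintype.card (fixedBy (Γ →* G) (1 : G)) = Nat.card (Γ →* G) := by
    rw [← Nat.card_eq_fintype_card]
    exact Nat.card_congr (Equiv.subtypeUnivEquiv fun φ => one_smul G φ)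
  rw [ks, homConj_eq_orbitRel, Nat.card_eq_fintype_card,
    ← sum_card_fixedBy_eq_card_orbits_mul_card_group, ← add_sum_erase _ _ (mem_univ 1),
    fixedBy_one]
  simp only [← Nat.card_eq_fintype_card, Nat.card_congr (fixedByEquivCentralizer _)]

end MonoidHom

theorem card_monoidHom_eq_pow_of_abelianization_equiv {Γ : Type*} [Group Γ] {n : ℕ}
    (e : Abelianization Γ ≃* Zg n) (K : Type*) [Group K] [IsMulCommutative K] :
    Nat.card (Γ →* K) = Nat.card K ^ n := by
  open scoped IsMulCommutative in
  calc Nat.card (Γ →* K)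
      = Nat.card ((Fin n → Multiplicative ℤ) →* K) := Nat.card_congr <|
        Abelianization.lift.trans <| (MulEquiv.monoidHomCongrLeftEquiv e).trans
          (MulEquiv.monoidHomCongrLeftEquiv (MulEquiv.funMultiplicative _ _))
    _ = Nat.card (Fin n → K) := Nat.card_congr <|
        (Pi.monoidHomMulEquiv _ K).toEquiv.trans (Equiv.piCongrRight fun _ => (zpowersHom K).symm)
    _ = Nat.card K ^ n := by rw [Nat.card_fun, Nat.card_fin]

instance Subgroup.decidableMemCentralizerSingleton {G : Type*} [Group G] [DecidableEq G] (σ : G) :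
    DecidablePred (· ∈ centralizer {σ}) :=
  fun _ => decidable_of_iff _ mem_centralizer_singleton_iff.symm

namespace A4

set_option maxRecDepth 100000 in
theorem isMulCommutative_centralizer {σ : A4} (hσ : σ ≠ 1) :
    IsMulCommutative (centralizer {σ}) := by
  have key : ∀ τ : A4, τ ≠ 1 →
      ∀ a ∈ centralizer {τ}, ∀ b ∈ centralizer {τ}, a * b = b * a := by decide
  exact ⟨⟨fun a b => Subtype.ext (key σ hσ a a.2 b b.2)⟩⟩

set_option maxRecDepth 100000 in
theorem sum_card_centralizer_pow (g : ℕ) :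
    ∑ σ ∈ univ.erase (1 : A4), Nat.card (centralizer {σ}) ^ g = 3 * 4 ^ g + 8 * 3 ^ g := by
  have cards : (univ.erase (1 : A4)).val.map (fun σ => Fintype.card (centralizer {σ})) =
      Multiset.replicate 3 4 + Multiset.replicate 8 3 := by decide
  simp only [Nat.card_eq_fintype_card]
  rw [sum_eq_multiset_sum, show (fun σ : A4 => Fintype.card (centralizer {σ}) ^ g) =
    (· ^ g) ∘ fun σ => Fintype.card (centralizer {σ}) from rfl, ← Multiset.map_map, cards]
  simp only [Multiset.map_add, Multiset.map_replicate, Multiset.sum_add, Multiset.sum_replicate,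
    smul_eq_mul]

end A4

theorem statement_8_general (Γ : Type*) [Group Γ] (hΓ : Group.FG Γ) (g : ℕ)
    (hab : Nonempty (Abelianization Γ ≃* Zg g)) :
    (Nat.card (Γ →* A4) : ℤ) = 12 * (ks A4 Γ : ℤ) - 8 * 3 ^ g - 3 * 4 ^ g := by
  obtain ⟨e⟩ := hab
  have hcentralizers :
      ∑ σ ∈ univ.erase (1 : A4), Nat.card (Γ →* centralizer {σ}) = 3 * 4 ^ g + 8 * 3 ^ g := by
    rw [← A4.sum_card_centralizer_pow g]
    refine sum_congr rfl fun σ hσ => ?_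
    have := A4.isMulCommutative_centralizer (ne_of_mem_erase hσ)
    exact card_monoidHom_eq_pow_of_abelianization_equiv e _
  have burnside := MonoidHom.ks_mul_card_eq (G := A4) (Γ := Γ)
  rw [hcentralizers, show Fintype.card A4 = 12 from rfl] at burnside
  zify at burnside
  linarith

theorem statement_8 (Γ : Type*) [Group Γ] (hΓ : Group.FG Γ) (g : ℕ) (hg : 1 ≤ g)
    (hab : Nonempty (Abelianization Γ ≃* Zg g)) :
    (Nat.card (Γ →* A4) : ℤ) = 12 * (ks A4 Γ : ℤ) - 8 * 3 ^ g - 3 * 4 ^ g :=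
  statement_8_general Γ hΓ g hab
end

section
/- Let Γ be a finitely generated group whose abelianization is a free abelian group of rank g ≥ 1. Then the number of homomorphisms from Γ to A5 satisfies |Hom(Γ, A5)| = 60·ks_{A5}(Γ) − 20·3^g − 15·4^g − 24·5^g. -/
/-!
Burnside's lemma for the conjugation action of a finite group `G` on `Hom(Γ, G)` gives
`∑_{a ∈ G} |Fix a| = |G| · ks_G(Γ)`, and `Fix a = Hom(Γ, C_G(a))`. In `A5` every nontrivial
element has an abelian centralizer, of order `3`, `4` or `5` (for `20`, `15` and `24` elements
respectively), and homomorphisms from `Γ` into an abelian group `C` factor through the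
abelianization `ℤ^g`, so there are `|C|^g` of them. The term `a = 1` is `|Hom(Γ, A5)|`.
-/

open MulAction Subgroup Finset
open scoped IsMulCommutative

section HomConj

variable (Γ G : Type*) [Group Γ] [Group G]

abbrev homConjAction : MulAction G (Γ →* G) where
  smul g φ := (MulAut.conj g).toMonoidHom.comp φ
  one_smul φ := by ext x; change 1 * φ x * 1⁻¹ = φ x; group
  mul_smul g h φ := by ext x; change g * h * φ x * (g * h)⁻¹ = g * (h * φ x * h⁻¹) * g⁻¹; group

attribute [local instance] homConjAction

variable {Γ G}

lemma homConjAction_smul_apply (g : G) (φ : Γ →* G) (x : Γ) : (g • φ) x = g * φ x * g⁻¹ := rfl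

lemma orbitRel_eq_homConj : orbitRel G (Γ →* G) = homConj Γ G := by
  ext φ ψ
  constructor
  · rintro ⟨g, rfl⟩
    exact ⟨g⁻¹, fun x => by simp [homConjAction_smul_apply, mul_assoc]⟩
  · rintro ⟨g, hg⟩
    exact ⟨g⁻¹, MonoidHom.ext fun x => by simp [homConjAction_smul_apply, hg x, mul_assoc]⟩

lemma ks_eq_card_orbitRel_quotient : ks G Γ = Nat.card (orbitRel.Quotient G (Γ →* G)) := by
  rw [ks, orbitRel.Quotient, orbitRel_eq_homConj]

def fixedByEquivHomCentralizer (a : G) :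
    fixedBy (Γ →* G) a ≃ (Γ →* centralizer ({a} : Set G)) where
  toFun φ := φ.1.codRestrict _ fun x => by
    have h : a * φ.1 x * a⁻¹ = φ.1 x := DFunLike.congr_fun φ.2 x
    rw [mul_inv_eq_iff_eq_mul] at h
    exact mem_centralizer_singleton_iff.mpr h.symm
  invFun ψ := ⟨(centralizer ({a} : Set G)).subtype.comp ψ, MonoidHom.ext fun x => by
    simp [homConjAction_smul_apply, ← mem_centralizer_singleton_iff.mp (ψ x).2]⟩
  left_inv _ := rfl
  right_inv _ := rfl

lemma finite_monoidHom_of_fg [Finite G] (hΓ : Group.FG Γ) : Finite (Γ →* G) := by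
  obtain ⟨S, hS, hfin⟩ := Group.fg_iff.mp hΓ
  have := hfin.to_subtype
  exact Finite.of_injective (fun φ : Γ →* G => fun s : S => φ s) fun φ ψ h =>
    MonoidHom.eq_of_eqOn_dense hS fun x hx => congrFun h ⟨x, hx⟩

theorem sum_card_monoidHom_centralizer [Fintype G] (hΓ : Group.FG Γ) :
    ∑ a : G, Nat.card (Γ →* centralizer ({a} : Set G)) = Nat.card G * ks G Γ := by
  classical
  have := finite_monoidHom_of_fg (G := G) hΓ
  have : Fintype (Γ →* G) := Fintype.ofFinite _
  have burnside := sum_card_fixedBy_eq_card_orbits_mul_card_group G (Γ →* G)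
  simp only [← Nat.card_eq_fintype_card, Nat.card_congr (fixedByEquivHomCentralizer _)]
    at burnside
  rw [burnside, ks_eq_card_orbitRel_quotient, mul_comm]

lemma card_monoidHom_centralizer_one :
    Nat.card (Γ →* centralizer ({1} : Set G)) = Nat.card (Γ →* G) :=
  Nat.card_congr <| MulEquiv.monoidHomCongrRightEquiv <|
    (MulEquiv.subgroupCongr (centralizer_eq_top_iff_subset.mpr (by simp))).trans topEquiv

end HomConj

theorem card_monoidHom_of_abelianization_mulEquiv {Γ ι : Type*} [Group Γ] [Finite ι]
    (e : Abelianization Γ ≃* Multiplicative (ι → ℤ)) (C : Type*) [CommGroup C] :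
    Nat.card (Γ →* C) = Nat.card C ^ Nat.card ι := by
  let toPi : (Γ →* C) ≃ (ι → Additive C) :=
    Abelianization.lift.trans <| e.monoidHomCongrLeftEquiv.trans <|
      MonoidHom.toAdditiveRight.trans <| (addMonoidHomLequivInt ℤ).toEquiv.trans
        ((Pi.basisFun ℤ ι).constr ℕ).toEquiv.symm
  rw [Nat.card_congr toPi, Nat.card_fun]
  rfl

lemma isMulCommutative_of_card_eq_prime {G : Type*} [Group G] {p : ℕ} (hp : p.Prime)
    (h : Nat.card G = p) : IsMulCommutative G :=
  have : Fact p.Prime := ⟨hp⟩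
  have := isCyclic_of_prime_card h
  inferInstance

namespace A5

set_option maxHeartbeats 1000000 in
theorem centralizer_card_multiset :
    (univ.erase (1 : A5)).val.map (fun a => #{h | h * a = a * h}) =
      Multiset.replicate 20 3 + Multiset.replicate 15 4 + Multiset.replicate 24 5 := by
  decide

lemma card_centralizer (a : A5) : Nat.card (centralizer ({a} : Set A5)) = #{h | h * a = a * h} := by
  rw [← Fintype.card_subtype, ← Nat.card_eq_fintype_card]
  exact Nat.card_congr (Equiv.subtypeEquivRight fun _ => mem_centralizer_singleton_iff)

lemma card_centralizer_mem_s9 {a : A5} (ha : a ≠ 1) :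
    Nat.card (centralizer ({a} : Set A5)) ∈ ({3, 2 ^ 2, 5} : Set ℕ) := by
  have hmem := Multiset.mem_map_of_mem (fun a : A5 => #{h | h * a = a * h})
    (mem_val.mpr (mem_erase.mpr ⟨ha, mem_univ a⟩))
  rw [centralizer_card_multiset] at hmem
  simp only [Multiset.mem_add, Multiset.mem_replicate] at hmem
  rw [card_centralizer]
  rcases hmem with (⟨-, h⟩ | ⟨-, h⟩) | ⟨-, h⟩ <;> simp [h]

lemma isMulCommutative_centralizer {a : A5} (ha : a ≠ 1) :
    IsMulCommutative (centralizer ({a} : Set A5)) := by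
  rcases card_centralizer_mem_s9 ha with h | h | h
  · exact isMulCommutative_of_card_eq_prime Nat.prime_three h
  · exact IsPGroup.isMulCommutative_of_card_eq_prime_sq (p := 2) h
  · exact isMulCommutative_of_card_eq_prime Nat.prime_five h

lemma sum_erase_one_card_centralizer_pow (g : ℕ) :
    ∑ a ∈ univ.erase (1 : A5), Nat.card (centralizer ({a} : Set A5)) ^ g =
      20 * 3 ^ g + 15 * 4 ^ g + 24 * 5 ^ g := by
  simp only [card_centralizer]
  rw [← Finset.sum_map_val, show (fun a : A5 => #{h | h * a = a * h} ^ g) =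
    (· ^ g) ∘ fun a => #{h | h * a = a * h} from rfl, ← Multiset.map_map,
    centralizer_card_multiset]
  simp only [Multiset.map_add, Multiset.map_replicate, Multiset.sum_add, Multiset.sum_replicate,
    smul_eq_mul]

end A5

theorem statement_9_general (Γ : Type*) [Group Γ] (hΓ : Group.FG Γ) (g : ℕ)
    (hab : Nonempty (Abelianization Γ ≃* Zg g)) :
    (Nat.card (Γ →* A5) : ℤ) =
      60 * (ks A5 Γ : ℤ) - 20 * 3 ^ g - 15 * 4 ^ g - 24 * 5 ^ g := by
  obtain ⟨e⟩ := hab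
  have hfix : ∀ a ∈ univ.erase (1 : A5),
      Nat.card (Γ →* centralizer ({a} : Set A5)) = Nat.card (centralizer ({a} : Set A5)) ^ g := by
    intro a ha
    have := A5.isMulCommutative_centralizer (ne_of_mem_erase ha)
    rw [card_monoidHom_of_abelianization_mulEquiv e, Nat.card_fin]
  have hcard : Nat.card A5 = 60 := by rw [nat_card_alternatingGroup, Nat.card_fin]; rfl
  have burnside := sum_card_monoidHom_centralizer (G := A5) hΓ
  rw [← add_sum_erase _ _ (mem_univ 1), card_monoidHom_centralizer_one, sum_congr rfl hfix,
    A5.sum_erase_one_card_centralizer_pow, hcard] at burnside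
  zify at burnside
  linarith

theorem statement_9 (Γ : Type*) [Group Γ] (hΓ : Group.FG Γ) (g : ℕ) (hg : 1 ≤ g)
    (hab : Nonempty (Abelianization Γ ≃* Zg g)) :
    (Nat.card (Γ →* A5) : ℤ) =
      60 * (ks A5 Γ : ℤ) - 20 * 3 ^ g - 15 * 4 ^ g - 24 * 5 ^ g :=
  statement_9_general Γ hΓ g hab
end

section
/- Let Γ be a group generated by two elements whose abelianization is infinite cyclic. Then ks_{A4}(Γ) = 4 or ks_{A4}(Γ) = 6. -/
/-!
A homomorphism `φ : Γ → A4` whose image is abelian factors through the abelianization `ℤ`, so it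
is determined by `φ t` for a lift `t` of the generator; these contribute one class for each of the
four conjugacy classes of `A4`. Otherwise the composite `Γ → A4 → A4 ⧸ V4 ≅ ℤ/3` is a nontrivial
character of `ℤ`, and in `A4` a non-commuting pair is determined up to simultaneous conjugation by
its image in `ℤ/3`; hence these classes inject into the two nontrivial characters. Twisting by the
outer automorphism of `A4` inverts the character, so either both or neither are attained.
-/

namespace MonoidHom

variable {Γ : Type*} [Group Γ]

theorem eq_zpowersHom_comp_of_commGroup {A : Type*} [CommGroup A] (h : Γ →* A)
    (e : Abelianization Γ ≃* Multiplicative ℤ) {t : Γ}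
    (ht : e (Abelianization.of t) = Multiplicative.ofAdd 1) :
    h = (zpowersHom A (h t)).comp (e.toMonoidHom.comp Abelianization.of) := by
  have hL : (Abelianization.lift h).comp e.symm.toMonoidHom = zpowersHom A (h t) :=
    MonoidHom.ext_mint (by rw [zpowersHom_apply, toAdd_ofAdd, zpow_one, ← ht]; simp)
  ext γ
  simp [← hL]

theorem eq_zpowersHom_comp_of_commute {G : Type*} [Group G] (φ : Γ →* G)
    (hφ : ∀ x y, Commute (φ x) (φ y)) (e : Abelianization Γ ≃* Multiplicative ℤ) {t : Γ}
    (ht : e (Abelianization.of t) = Multiplicative.ofAdd 1) :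
    φ = (zpowersHom G (φ t)).comp (e.toMonoidHom.comp Abelianization.of) := by
  let _ : CommGroup φ.range :=
    { mul_comm := by
        rintro ⟨_, x, rfl⟩ ⟨_, y, rfl⟩
        exact Subtype.ext (hφ x y).eq }
  ext γ
  simpa using congrArg Subtype.val
    (DFunLike.congr_fun (φ.rangeRestrict.eq_zpowersHom_comp_of_commGroup e ht) γ)

end MonoidHom

noncomputable def Setoid.quotientEquivSumOfInvariant {α : Type*} (s : Setoid α) (P : α → Prop)
    (hP : ∀ x y, s x y → (P x ↔ P y)) :
    Quotient s ≃ Quotient (s.comap (Subtype.val : {x // P x} → α)) ⊕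
      Quotient (s.comap (Subtype.val : {x // ¬ P x} → α)) :=
  let P' : Quotient s → Prop := Quotient.lift P fun x y h => propext (hP x y h)
  have := Classical.decPred P'
  (Equiv.sumCompl P').symm.trans <| Equiv.sumCongr
    (Equiv.subtypeQuotientEquivQuotientSubtype P P' (fun _ => Iff.rfl) fun _ _ => Iff.rfl)
    (Equiv.subtypeQuotientEquivQuotientSubtype _ (¬ P' ·) (fun _ => Iff.rfl) fun _ _ => Iff.rfl)

section Homomorphisms

variable {Γ G : Type*} [Group Γ] [Group G]

theorem ks_eq_ksRestrict_add_ksRestrict [Finite (Γ →* G)] (P : (Γ →* G) → Prop)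
    (hP : ∀ φ ψ, homConj Γ G φ ψ → (P φ ↔ P ψ)) :
    ks G Γ = ksRestrict G Γ P + ksRestrict G Γ (¬ P ·) := by
  rw [ks, Nat.card_congr (Setoid.quotientEquivSumOfInvariant _ P hP), Nat.card_sum, ksRestrict,
    ksRestrict]

theorem forall_commute_iff_of_homConj {φ ψ : Γ →* G} (h : homConj Γ G φ ψ) :
    (∀ x y, Commute (φ x) (φ y)) ↔ ∀ x y, Commute (ψ x) (ψ y) := by
  obtain ⟨g, hg⟩ := h
  simp only [hg, Commute.conj_iff]

theorem homConj_of_closure_eq_top {s : Set Γ} (hs : Subgroup.closure s = ⊤) {φ ψ : Γ →* G}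
    (g : G) (h : ∀ x ∈ s, ψ x = g * φ x * g⁻¹) : homConj Γ G φ ψ := by
  refine ⟨g, fun x => ?_⟩
  have := MonoidHom.eq_of_eqOn_dense hs (f := ψ) (g := (MulAut.conj g).toMonoidHom.comp φ) h
  exact DFunLike.congr_fun this x

theorem MonoidHom.commute_of_closure_eq_top {s : Set Γ} (hs : Subgroup.closure s = ⊤)
    (φ : Γ →* G) (h : ∀ x ∈ s, ∀ y ∈ s, Commute (φ x) (φ y)) (x y : Γ) :
    Commute (φ x) (φ y) := by
  have := Subgroup.isMulCommutative_closure (k := φ '' s) (by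
    rintro _ ⟨x, hx, rfl⟩ _ ⟨y, hy, rfl⟩
    exact (h x hx y hy).eq)
  have hmem : ∀ z, φ z ∈ Subgroup.closure (φ '' s) := fun z => by
    rw [← MonoidHom.map_closure, hs]
    exact ⟨z, trivial, rfl⟩
  exact setLike_mul_comm (hmem x) (hmem y)

theorem finite_hom_of_closure_eq_top {s : Set Γ} (hs : Subgroup.closure s = ⊤) [Finite s]
    [Finite G] : Finite (Γ →* G) :=
  Finite.of_injective (fun φ (x : s) => φ x) fun _ _ h =>
    MonoidHom.eq_of_eqOn_dense hs fun x hx => congrFun h ⟨x, hx⟩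

theorem ksRestrict_commute_eq_card_conjClasses (e : Abelianization Γ ≃* Multiplicative ℤ)
    {t : Γ} (ht : e (Abelianization.of t) = Multiplicative.ofAdd 1) :
    ksRestrict G Γ (fun φ => ∀ x y, Commute (φ x) (φ y)) = Nat.card (ConjClasses G) := by
  refine Nat.card_congr (Quotient.congr
    { toFun := fun φ => φ.1 t
      invFun := fun x => ⟨(zpowersHom G x).comp (e.toMonoidHom.comp Abelianization.of),
        fun _ _ => (Commute.refl x).zpow_zpow _ _⟩
      left_inv := fun φ => Subtype.ext (φ.1.eq_zpowersHom_comp_of_commute φ.2 e ht).symm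
      right_inv := fun x => by simp [ht] } fun φ ψ => ?_)
  refine ⟨fun ⟨g, hg⟩ => isConj_iff.2 ⟨g, (hg t).symm⟩, fun hconj => ?_⟩
  obtain ⟨g, hg : g * φ.1 t * g⁻¹ = ψ.1 t⟩ := isConj_iff.1 hconj
  refine ⟨g, fun x => ?_⟩
  rw [φ.1.eq_zpowersHom_comp_of_commute φ.2 e ht, ψ.1.eq_zpowersHom_comp_of_commute ψ.2 e ht]
  simp [← hg, conj_zpow]

end Homomorphisms

namespace A4

set_option maxRecDepth 10000

def threeCycle : A4 :=
  ⟨Equiv.swap 0 1 * Equiv.swap 1 2, by rw [Equiv.Perm.mem_alternatingGroup]; decide⟩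

/-- The quotient map `A4 → A4 ⧸ V4 ≅ ℤ/3`, read off the coset: `V4 = {x | x * x = 1}`. -/
def toZ3 : A4 →* Z3 :=
  MonoidHom.mk' (fun x => .ofAdd <|
    if x * x = 1 then 0 else if threeCycle⁻¹ * x * (threeCycle⁻¹ * x) = 1 then 1 else 2)
    (by decide)

theorem commute_of_toZ3_eq_one : ∀ x y : A4, toZ3 x = 1 → toZ3 y = 1 → Commute x y := by
  simp only [Commute, SemiconjBy]; decide

set_option synthInstance.maxSize 2048 in
theorem exists_conj_of_toZ3_eq : ∀ x y x' y' : A4, x * y ≠ y * x → x' * y' ≠ y' * x' →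
    toZ3 x = toZ3 x' → toZ3 y = toZ3 y' → ∃ g : A4, g * x * g⁻¹ = x' ∧ g * y * g⁻¹ = y' := by
  decide

def σ : MulAut A4 := MulAut.conjNormal (Equiv.swap (0 : Fin 4) 1)

theorem toZ3_σ : ∀ x : A4, toZ3 (σ x) = (toZ3 x)⁻¹ := by decide

theorem card_conjClasses : Nat.card (ConjClasses A4) = 4 := by
  rw [Nat.card_eq_fintype_card]; decide

end A4

section TwoGenerated

variable {Γ : Type*} [Group Γ]

theorem A4.toZ3_apply_ne_one (e : Abelianization Γ ≃* Multiplicative ℤ) {t : Γ}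
    (ht : e (Abelianization.of t) = Multiplicative.ofAdd 1) {φ : Γ →* A4}
    (hφ : ¬ ∀ x y, Commute (φ x) (φ y)) : A4.toZ3 (φ t) ≠ 1 := by
  intro h
  have hker : ∀ x, A4.toZ3 (φ x) = 1 := fun x => by
    simpa [h] using DFunLike.congr_fun ((A4.toZ3.comp φ).eq_zpowersHom_comp_of_commGroup e ht) x
  exact hφ fun x y => A4.commute_of_toZ3_eq_one _ _ (hker x) (hker y)

theorem A4.homConj_of_toZ3_eq {a b : Γ} (hgen : Subgroup.closure {a, b} = ⊤)
    (e : Abelianization Γ ≃* Multiplicative ℤ) {t : Γ}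
    (ht : e (Abelianization.of t) = Multiplicative.ofAdd 1) {φ ψ : Γ →* A4}
    (hφ : ¬ ∀ x y, Commute (φ x) (φ y)) (hψ : ¬ ∀ x y, Commute (ψ x) (ψ y))
    (h : A4.toZ3 (φ t) = A4.toZ3 (ψ t)) : homConj Γ A4 φ ψ := by
  have hcomp : A4.toZ3.comp φ = A4.toZ3.comp ψ := by
    rw [(A4.toZ3.comp φ).eq_zpowersHom_comp_of_commGroup e ht,
      (A4.toZ3.comp ψ).eq_zpowersHom_comp_of_commGroup e ht]
    simp [h]
  have hgens : ∀ χ : Γ →* A4, ¬ (∀ x y, Commute (χ x) (χ y)) → χ a * χ b ≠ χ b * χ a := by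
    refine fun χ hχ hab => hχ (χ.commute_of_closure_eq_top hgen ?_)
    simp only [Set.mem_insert_iff, Set.mem_singleton_iff]
    rintro x (rfl | rfl) y (rfl | rfl)
    exacts [.refl _, hab, hab.symm, .refl _]
  obtain ⟨g, hga, hgb⟩ := A4.exists_conj_of_toZ3_eq _ _ _ _ (hgens φ hφ) (hgens ψ hψ)
    (DFunLike.congr_fun hcomp a) (DFunLike.congr_fun hcomp b)
  refine homConj_of_closure_eq_top hgen g ?_
  simp only [Set.mem_insert_iff, Set.mem_singleton_iff]
  rintro x (rfl | rfl)
  exacts [hga.symm, hgb.symm]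

theorem A4.ksRestrict_not_commute {a b : Γ} (hgen : Subgroup.closure {a, b} = ⊤)
    (e : Abelianization Γ ≃* Multiplicative ℤ) {t : Γ}
    (ht : e (Abelianization.of t) = Multiplicative.ofAdd 1) :
    ksRestrict A4 Γ (fun φ => ¬ ∀ x y, Commute (φ x) (φ y)) = 0 ∨
      ksRestrict A4 Γ (fun φ => ¬ ∀ x y, Commute (φ x) (φ y)) = 2 := by
  let ι : Quotient ((homConj Γ A4).comap
      (Subtype.val : {φ : Γ →* A4 // ¬ ∀ x y, Commute (φ x) (φ y)} → _)) → {z : Z3 // z ≠ 1} :=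
    Quotient.lift (fun φ => ⟨A4.toZ3 (φ.1 t), A4.toZ3_apply_ne_one e ht φ.2⟩)
      fun φ ψ ⟨g, hg⟩ => by ext; simp [hg t]
  have hι : Function.Injective ι := by
    rintro ⟨φ⟩ ⟨ψ⟩ h
    exact Quotient.sound (A4.homConj_of_toZ3_eq hgen e ht φ.2 ψ.2 (congrArg Subtype.val h))
  have := Finite.of_injective ι hι
  have hle : ksRestrict A4 Γ (fun φ => ¬ ∀ x y, Commute (φ x) (φ y)) ≤ 2 :=
    (Nat.card_le_card_of_injective ι hι).trans_eq (by rw [Nat.card_eq_fintype_card]; rfl)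
  rcases isEmpty_or_nonempty {φ : Γ →* A4 // ¬ ∀ x y, Commute (φ x) (φ y)} with _ | ⟨φ, hφ⟩
  · exact .inl Nat.card_of_isEmpty
  have hσφ : ¬ ∀ x y, Commute (A4.σ.toMonoidHom.comp φ x) (A4.σ.toMonoidHom.comp φ y) := by
    simpa [commute_map_iff A4.σ.injective] using hφ
  -- `σ` inverts `toZ3`, so `φ` and `σ ∘ φ` are not conjugate.
  have hne : ι ⟦⟨φ, hφ⟩⟧ ≠ ι ⟦⟨_, hσφ⟩⟧ := fun h => by
    have hinv : ∀ z : Z3, z ≠ 1 → z⁻¹ ≠ z := by decide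
    exact hinv _ (A4.toZ3_apply_ne_one e ht hφ)
      (by simpa [ι, A4.toZ3_σ] using (congrArg Subtype.val h).symm)
  have : 1 < ksRestrict A4 Γ (fun φ => ¬ ∀ x y, Commute (φ x) (φ y)) :=
    Finite.one_lt_card_iff_nontrivial.2 ⟨_, _, ne_of_apply_ne ι hne⟩
  omega

end TwoGenerated

theorem statement_10 (Γ : Type*) [Group Γ]
    (hgen : ∃ a b : Γ, Subgroup.closure {a, b} = (⊤ : Subgroup Γ))
    (hab : Nonempty (Abelianization Γ ≃* Multiplicative ℤ)) :
    ks A4 Γ = 4 ∨ ks A4 Γ = 6 := by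
  obtain ⟨a, b, hgen⟩ := hgen
  obtain ⟨e⟩ := hab
  obtain ⟨t, ht⟩ : ∃ t : Γ, e (Abelianization.of t) = Multiplicative.ofAdd 1 :=
    (e.surjective.comp QuotientGroup.mk_surjective) _
  have := finite_hom_of_closure_eq_top (G := A4) hgen
  rw [ks_eq_ksRestrict_add_ksRestrict _ fun _ _ => forall_commute_iff_of_homConj,
    ksRestrict_commute_eq_card_conjClasses e ht, A4.card_conjClasses]
  rcases A4.ksRestrict_not_commute hgen e ht with h | h <;> omega
end
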